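/- arXiv:2605.03307 — 4 statements merged into one kernel-verified Lean document; each statement's English description precedes it below -/
import Mathlib

section
/- In the default propagation algorithm starting from borrower u with residual loss ℓ₀ = max{0, P(u) − G(u)}, at every step of the upward loop the current residual loss ℓ at node j satisfies ℓ ≤ R(j), where R is the required-delegation function. Consequently, if the current state satisfies D(p(j), j) ≥ R(j) for every non-seed j on the sponsor path, then every delegation reduction D(p(j),j) ← D(p(j),j) − ℓ performed by the algorithm is feasible (never makes the delegation negative). -/
/-! Induction along the sponsor path. The residual loss entering `path k` is at most `R (path k)`,
which is one summand of the children-sum defining `R (path (k + 1))`; since principals are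
nonnegative, subtracting the credit burnt at `path (k + 1)` keeps the loss below
`max 0 (P + Σ R - G) = R (path (k + 1))`. -/

open Finset

theorem sub_min_le_max_zero_sub {α : Type*} [AddCommGroup α] [LinearOrder α]
    [IsOrderedAddMonoid α] {a b g : α} (h : a ≤ b) : a - min g a ≤ max 0 (b - g) := by
  rcases le_total g a with hga | hag
  · rw [min_eq_left hga]
    exact le_max_of_le_right (sub_le_sub_right h g)
  · rw [min_eq_right hag, sub_self]
    exact le_max_left 0 _

section RequiredDelegation

variable {U : Type*} [Fintype U] [DecidableEq U] {S : Finset U} {p : U → U} {P G R : U → ℝ}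

theorem required_nonneg
    (hR : ∀ v, R v = max 0 (P v + (∑ w ∈ univ.filter (fun w => w ∉ S ∧ p w = v), R w) - G v))
    (v : U) : 0 ≤ R v :=
  (hR v) ▸ le_max_left _ _

theorem required_le_sum_siblings
    (hR : ∀ v, R v = max 0 (P v + (∑ w ∈ univ.filter (fun w => w ∉ S ∧ p w = v), R w) - G v))
    {w : U} (hw : w ∉ S) : R w ≤ ∑ x ∈ univ.filter (fun x => x ∉ S ∧ p x = p w), R x :=
  single_le_sum (fun x _ => required_nonneg hR x) (by simp [hw])

theorem residual_le_required (hP : ∀ u, 0 ≤ P u)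
    (hR : ∀ v, R v = max 0 (P v + (∑ w ∈ univ.filter (fun w => w ∉ S ∧ p w = v), R w) - G v))
    {n : ℕ} {path : ℕ → U} (hpath : ∀ k < n, path k ∉ S ∧ p (path k) = path (k + 1))
    {ℓ : ℕ → ℝ} (hℓ0 : ℓ 0 = P (path 0) - min (G (path 0)) (P (path 0)))
    (hℓ : ∀ k, ℓ (k + 1) = ℓ k - min (G (path (k + 1))) (ℓ k)) :
    ∀ k ≤ n, ℓ k ≤ R (path k)
  | 0, _ => by
    rw [hℓ0, hR]
    exact sub_min_le_max_zero_sub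
      (le_add_of_nonneg_right (sum_nonneg fun w _ => required_nonneg hR w))
  | k + 1, hk => by
    obtain ⟨hS, hp⟩ := hpath k hk
    rw [hℓ, hR]
    apply sub_min_le_max_zero_sub
    calc ℓ k ≤ R (path k) := residual_le_required hP hR hpath hℓ0 hℓ k (Nat.le_of_succ_le hk)
      _ ≤ ∑ w ∈ univ.filter (fun w => w ∉ S ∧ p w = path (k + 1)), R w :=
        hp ▸ required_le_sum_siblings hR hS
      _ ≤ _ := le_add_of_nonneg_left (hP _)

end RequiredDelegation

theorem default_propagation_feasible_general
    {U : Type*} [Fintype U] [DecidableEq U]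
    (S : Finset U) (p : U → U)
    (P G R : U → ℝ) (D : U → U → ℝ)
    (hP : ∀ u, 0 ≤ P u)
    (hR : ∀ v, R v = max 0
      (P v + (∑ w ∈ univ.filter (fun w => w ∉ S ∧ p w = v), R w) - G v))
    (u : U) (n : ℕ) (path : ℕ → U)
    (hpath0 : path 0 = u)
    (hpath : ∀ k < n, path k ∉ S ∧ p (path k) = path (k + 1))
    (ℓ : ℕ → ℝ)
    (hℓ0 : ℓ 0 = P u - min (G u) (P u))
    (hℓ : ∀ k, ℓ (k + 1) = ℓ k - min (G (path (k + 1))) (ℓ k)) :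
    (∀ k ≤ n, ℓ k ≤ R (path k)) ∧
    ((∀ k < n, R (path k) ≤ D (p (path k)) (path k)) →
      ∀ k < n, 0 ≤ D (p (path k)) (path k) - ℓ k) := by
  subst hpath0
  have hbound := residual_le_required hP hR hpath hℓ0 hℓ
  exact ⟨hbound, fun hD k hk => sub_nonneg.2 ((hbound k hk.le).trans (hD k hk))⟩

/-- Default propagation is well-defined: along the sponsor path from the
borrower, the current residual loss at each node is bounded by the required
delegation there, so every delegation reduction performed by the algorithm is
feasible. -/
theorem default_propagation_feasible
    {U : Type*} [Fintype U] [DecidableEq U]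
    (S : Finset U) (p : U → U)
    (P G R : U → ℝ) (D : U → U → ℝ)
    (hP : ∀ u, 0 ≤ P u) (hG : ∀ u, 0 ≤ G u)
    (hDpos : ∀ a b, 0 ≤ D a b)
    (hR : ∀ v, R v = max 0
      (P v + (∑ w ∈ univ.filter (fun w => w ∉ S ∧ p w = v), R w) - G v))
    (u : U) (n : ℕ) (path : ℕ → U)
    (hpath0 : path 0 = u)
    (hpath : ∀ k < n, path k ∉ S ∧ p (path k) = path (k + 1))
    (ℓ : ℕ → ℝ)
    (hℓ0 : ℓ 0 = P u - min (G u) (P u))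
    (hℓ : ∀ k, ℓ (k + 1) = ℓ k - min (G (path (k + 1))) (ℓ k)) :
    (∀ k ≤ n, ℓ k ≤ R (path k)) ∧
    ((∀ k < n, R (path k) ≤ D (p (path k)) (path k)) →
      ∀ k < n, 0 ≤ D (p (path k)) (path k) - ℓ k) :=
  default_propagation_feasible_general S p P G R D hP hR u n path hpath0 hpath ℓ hℓ0 hℓ
end

section
/- Consider a single default-propagation step at an upstream node v (not the borrower) on the sponsor path: incoming loss ℓ reduces the delegation D(v,j) on the path edge to its child j by ℓ, burns A(v) = min{G(v), ℓ} from v's earned credit, and passes ℓ' = ℓ − A(v) upward (reducing v's incoming delegation by ℓ' if v is a non-seed, or its base budget by ℓ' if v is a seed). Then v's budget falls by exactly ℓ, its total outgoing delegation falls by exactly ℓ, and therefore v's credit limit L(v) = Budget(v) − Σ_{(v→w)} D(v,w) is unchanged. -/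
/-!
The burnt credit `A` and the loss `ℓ - A` passed upward together take exactly `ℓ` out of `v`'s
budget, whether the base is the seed budget or the incoming delegation; among `v`'s outgoing
edges only `v → j` changes, also by `ℓ`, so the difference `L(v)` is unchanged.
-/

open Finset

theorem Finset.sum_sub_sum_eq_of_eq_of_ne {ι M : Type*} [AddCommGroup M] {s : Finset ι}
    {f g : ι → M} {j : ι} (hj : j ∈ s) (hfg : ∀ w, w ≠ j → g w = f w) :
    ∑ w ∈ s, g w - ∑ w ∈ s, f w = g j - f j := by
  rw [← sum_sub_distrib]
  exact sum_eq_single_of_mem j hj fun w _ hw => by rw [hfg w hw, sub_self]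

theorem step_preserves_credit_limit_general
    {U : Type*} [Fintype U] [DecidableEq U]
    (S : Finset U) (p : U → U)
    (G G' : U → ℝ) (D D' : U → U → ℝ)
    (v j : U) (hj : j ∉ S) (hpj : p j = v)
    (ℓ A : ℝ)
    (hG' : G' v = G v - A)
    (hD'edge : D' v j = D v j - ℓ)
    (hD'other : ∀ w, w ≠ j → D' v w = D v w)
    (Din Din' B0v B0v' : ℝ)
    (hin : v ∉ S → Din' = Din - (ℓ - A))
    (hin' : v ∈ S → B0v' = B0v - (ℓ - A))
    (Budget Budget' : ℝ)
    (hB : Budget = if v ∈ S then B0v + G v else Din + G v)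
    (hB' : Budget' = if v ∈ S then B0v' + G' v else Din' + G' v) :
    Budget' - Budget = -ℓ ∧
    ((∑ w ∈ univ.filter (fun w => w ∉ S ∧ p w = v), D' v w)
      - ∑ w ∈ univ.filter (fun w => w ∉ S ∧ p w = v), D v w) = -ℓ ∧
    Budget' - (∑ w ∈ univ.filter (fun w => w ∉ S ∧ p w = v), D' v w)
      = Budget - ∑ w ∈ univ.filter (fun w => w ∉ S ∧ p w = v), D v w := by
  have hBudget : Budget' - Budget = -ℓ := by
    split_ifs at hB hB' with hv
    · rw [hB, hB', hin' hv, hG']; ring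
    · rw [hB, hB', hin hv, hG']; ring
  have hOut : ∑ w ∈ univ.filter (fun w => w ∉ S ∧ p w = v), D' v w
      - ∑ w ∈ univ.filter (fun w => w ∉ S ∧ p w = v), D v w = -ℓ := by
    rw [sum_sub_sum_eq_of_eq_of_ne (mem_filter.2 ⟨mem_univ j, hj, hpj⟩) hD'other, hD'edge]
    ring
  exact ⟨hBudget, hOut, by linarith⟩

/-- A single default-propagation step at an upstream node `v`: its budget and
its total outgoing delegation both fall by exactly `ℓ`, so its credit limit is
unchanged. -/
theorem step_preserves_credit_limit
    {U : Type*} [Fintype U] [DecidableEq U]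
    (S : Finset U) (p : U → U)
    (G G' : U → ℝ) (D D' : U → U → ℝ)
    (v j : U) (hj : j ∉ S) (hpj : p j = v)
    (ℓ A : ℝ) (hℓ : 0 ≤ ℓ) (hA : A = min (G v) ℓ)
    (hG' : G' v = G v - A)
    (hD'edge : D' v j = D v j - ℓ)
    (hD'other : ∀ w, w ≠ j → D' v w = D v w)
    (Din Din' B0v B0v' : ℝ)
    (hin : v ∉ S → Din' = Din - (ℓ - A))
    (hin' : v ∈ S → B0v' = B0v - (ℓ - A))
    (Budget Budget' : ℝ)
    (hB : Budget = if v ∈ S then B0v + G v else Din + G v)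
    (hB' : Budget' = if v ∈ S then B0v' + G' v else Din' + G' v) :
    Budget' - Budget = -ℓ ∧
    ((∑ w ∈ univ.filter (fun w => w ∉ S ∧ p w = v), D' v w)
      - ∑ w ∈ univ.filter (fun w => w ∉ S ∧ p w = v), D v w) = -ℓ ∧
    Budget' - (∑ w ∈ univ.filter (fun w => w ∉ S ∧ p w = v), D' v w)
      = Budget - ∑ w ∈ univ.filter (fun w => w ∉ S ∧ p w = v), D v w :=
  step_preserves_credit_limit_general S p G G' D D' v j hj hpj ℓ A hG' hD'edge hD'other Din Din' B0v
    B0v' hin hin' Budget Budget' hB hB'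
end

section
/- For any node v in the sponsor forest, R(v) ≥ max{0, (Σ_{u in subtree of v} P(u)) − (Σ_{u in subtree of v} G(u))}: the required delegation into v is at least the total principal in v's subtree minus the total earned credit in v's subtree (when positive). -/
open Finset

/-! Summing over a subtree splits into the root and the subtrees of its children (these are
disjoint because every node has at most one parent). Hence if `f v + ∑_{children w} R w ≤ R v`
at every node, well-founded induction gives `∑_{subtree v} f ≤ R v`; the recursion for `R`
satisfies this with `f = P - G`, and `R ≥ 0` supplies the other half of the maximum. -/

namespace Relation

variable {U : Type*} [Fintype U] {r : U → U → Prop} [DecidableRel r]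
  (subtree : U → Finset U) (hsub : ∀ v u, u ∈ subtree v ↔ ReflTransGen r u v)
include hsub

theorem subtree_eq_insert_biUnion_children [DecidableEq U] (v : U) :
    subtree v = insert v ((univ.filter (r · v)).biUnion subtree) := by
  ext u
  simp only [mem_insert, mem_biUnion, mem_filter, mem_univ, true_and, hsub,
    ReflTransGen.cases_tail_iff r u v]
  grind

theorem pairwiseDisjoint_subtree_children (hacyc : ∀ a, ¬ TransGen r a a)
    (hr : Relator.RightUnique r) (v : U) :
    Set.PairwiseDisjoint ↑(univ.filter (r · v)) subtree := by
  have not_below_sibling : ∀ x y, r x v → r y v → x ≠ y → ¬ ReflTransGen r x y := by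
    intro x y hx hy hxy hxy'
    rcases ReflTransGen.cases_head hxy' with rfl | ⟨c, hxc, hcy⟩
    · exact hxy rfl
    · obtain rfl : c = v := hr hxc hx
      exact hacyc c (TransGen.tail' hcy hy)
  intro a ha b hb hab
  simp only [mem_coe, mem_filter, mem_univ, true_and] at ha hb
  refine disjoint_left.2 fun u hua hub => ?_
  rcases ReflTransGen.total_of_right_unique hr ((hsub a u).1 hua) ((hsub b u).1 hub) with h | h
  · exact not_below_sibling a b ha hb hab h
  · exact not_below_sibling b a hb ha (Ne.symm hab) h

theorem sum_subtree_eq_add_sum_children [DecidableEq U] {M : Type*} [AddCommMonoid M]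
    (hacyc : ∀ a, ¬ TransGen r a a) (hr : Relator.RightUnique r) (f : U → M) (v : U) :
    ∑ u ∈ subtree v, f u = f v + ∑ w ∈ univ.filter (r · v), ∑ u ∈ subtree w, f u := by
  have hv : v ∉ (univ.filter (r · v)).biUnion subtree := by
    simp only [mem_biUnion, mem_filter, mem_univ, true_and, not_exists, not_and]
    exact fun w hwv hv => hacyc v (TransGen.tail' ((hsub w v).1 hv) hwv)
  rw [subtree_eq_insert_biUnion_children subtree hsub v, sum_insert hv,
    sum_biUnion (pairwiseDisjoint_subtree_children subtree hsub hacyc hr v)]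

theorem sum_subtree_le_of_add_sum_children_le [DecidableEq U] {M : Type*} [AddCommMonoid M]
    [PartialOrder M] [IsOrderedAddMonoid M] (hwf : WellFounded r) (hr : Relator.RightUnique r)
    (f R : U → M) (hfR : ∀ v, f v + ∑ w ∈ univ.filter (r · v), R w ≤ R v) (v : U) :
    ∑ u ∈ subtree v, f u ≤ R v := by
  have hacyc : ∀ a, ¬ TransGen r a a := hwf.transGen.irrefl.irrefl
  induction v using hwf.induction with
  | _ v ih =>
    calc ∑ u ∈ subtree v, f u
        = f v + ∑ w ∈ univ.filter (r · v), ∑ u ∈ subtree w, f u :=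
          sum_subtree_eq_add_sum_children subtree hsub hacyc hr f v
      _ ≤ f v + ∑ w ∈ univ.filter (r · v), R w :=
          add_le_add_right (sum_le_sum fun w hw => ih w (mem_filter.1 hw).2) _
      _ ≤ R v := hfR v

end Relation

theorem required_delegation_subtree_bound_general
    {U : Type*} [Fintype U] [DecidableEq U]
    (S : Finset U) (p : U → U)
    (hwf : WellFounded (fun a b : U => a ∉ S ∧ p a = b))
    (P G R : U → ℝ)
    (hR : ∀ v, R v = max 0
      (P v + (∑ w ∈ univ.filter (fun w => w ∉ S ∧ p w = v), R w) - G v))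
    (subtree : U → Finset U)
    (hsub : ∀ v u, u ∈ subtree v ↔
      Relation.ReflTransGen (fun a b : U => a ∉ S ∧ p a = b) u v)
    (v : U) :
    max 0 ((∑ u ∈ subtree v, P u) - ∑ u ∈ subtree v, G u) ≤ R v := by
  have hparent : Relator.RightUnique fun a b : U => a ∉ S ∧ p a = b := by
    rintro a b c ⟨-, rfl⟩ ⟨-, rfl⟩
    rfl
  refine max_le (hR v ▸ le_max_left _ _) ?_
  rw [← sum_sub_distrib]
  refine Relation.sum_subtree_le_of_add_sum_children_le subtree hsub hwf hparent
    (fun u => P u - G u) R (fun u => ?_) v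
  rw [hR u]
  exact le_max_of_le_right (by linarith)

/-- Lower bound on required delegation: `R v` is at least total subtree
principal minus total subtree earned credit, when positive. -/
theorem required_delegation_subtree_bound
    {U : Type*} [Fintype U] [DecidableEq U]
    (S : Finset U) (p : U → U)
    (hwf : WellFounded (fun a b : U => a ∉ S ∧ p a = b))
    (P G R : U → ℝ)
    (hP : ∀ u, 0 ≤ P u) (hG : ∀ u, 0 ≤ G u)
    (hR : ∀ v, R v = max 0
      (P v + (∑ w ∈ univ.filter (fun w => w ∉ S ∧ p w = v), R w) - G v))
    (subtree : U → Finset U)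
    (hsub : ∀ v u, u ∈ subtree v ↔
      Relation.ReflTransGen (fun a b : U => a ∉ S ∧ p a = b) u v)
    (v : U) :
    max 0 ((∑ u ∈ subtree v, P u) - ∑ u ∈ subtree v, G u) ≤ R v :=
  required_delegation_subtree_bound_general S p hwf P G R hR subtree hsub v
end

section
/- If two non-seed accounts v₁ and v₂ share the same sponsor u, then splitting a single delegation D(u,v) = c into D(u,v₁) = c₁ and D(u,v₂) = c₂ with c₁ + c₂ = c leaves aggregate credit capacity Σ_w L(w) unchanged; creating an extra pseudonym funded by splitting an existing delegation cannot increase total borrowing capacity. -/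
/-!
Every non-seed account's budget contains the delegation it receives, and that same amount is
subtracted from its sponsor's credit limit; so in `∑ w, L w` all delegations cancel and the total
is `∑ s ∈ S, B0 s + ∑ w, G w`. Splitting a delegation leaves the seeds and their
base budgets unchanged and gives the fresh pseudonym no earned credit, so both totals agree.
-/

open Finset

section CreditConservation

variable {V M : Type*} [Fintype V] [DecidableEq V] [AddCommGroup M]

lemma sum_delegations_eq_sum_compl (S : Finset V) (p : V → V) (D : V → V → M) :
    ∑ w, ∑ x ∈ univ.filter (fun x => x ∉ S ∧ p x = w), D w x = ∑ x ∈ Sᶜ, D (p x) x := by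
  rw [← sum_fiberwise Sᶜ p]
  refine sum_congr rfl fun w _ => ?_
  refine sum_congr (by ext; simp) fun x hx => ?_
  rw [(mem_filter.mp hx).2]

lemma sum_creditLimit_eq (S : Finset V) (p : V → V) (B0 G : V → M) (D : V → V → M)
    (Budget L : V → M)
    (hBS : ∀ s ∈ S, Budget s = B0 s + G s)
    (hBN : ∀ w ∉ S, Budget w = D (p w) w + G w)
    (hL : ∀ w, L w = Budget w -
      ∑ x ∈ univ.filter (fun x => x ∉ S ∧ p x = w), D w x) :
    ∑ w, L w = ∑ s ∈ S, B0 s + ∑ w, G w := by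
  have hBudget : ∑ w, Budget w = ∑ s ∈ S, B0 s + ∑ x ∈ Sᶜ, D (p x) x + ∑ w, G w := by
    rw [← sum_add_sum_compl S Budget, ← sum_add_sum_compl S G,
      sum_congr rfl hBS, sum_congr rfl fun w hw => hBN w (mem_compl.mp hw),
      sum_add_distrib, sum_add_distrib]
    abel
  simp only [hL]
  rw [sum_sub_distrib, sum_delegations_eq_sum_compl, hBudget]
  abel

end CreditConservation

theorem sybil_split_conserves_capacity_general
    {U : Type*} [Fintype U] [DecidableEq U]
    (S : Finset U) (p : U → U)
    (B0 G : U → ℝ) (D : U → U → ℝ)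
    -- post-split state on `U ⊕ Unit`, where `Sum.inr ()` is the fresh pseudonym
    (S' : Finset (U ⊕ Unit)) (p' : U ⊕ Unit → U ⊕ Unit)
    (B0' G' : U ⊕ Unit → ℝ) (D' : U ⊕ Unit → U ⊕ Unit → ℝ)
    (hS' : ∀ x, x ∈ S' ↔ ∃ s ∈ S, x = Sum.inl s)
    (hG'l : ∀ w : U, G' (Sum.inl w) = G w)
    (hG'r : G' (Sum.inr ()) = 0)
    (hB0' : ∀ w : U, B0' (Sum.inl w) = B0 w)
    (Budget L : U → ℝ) (Budget' L' : U ⊕ Unit → ℝ)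
    (hBS : ∀ s ∈ S, Budget s = B0 s + G s)
    (hBN : ∀ w ∉ S, Budget w = D (p w) w + G w)
    (hL : ∀ w, L w = Budget w -
      ∑ x ∈ univ.filter (fun x => x ∉ S ∧ p x = w), D w x)
    (hBS' : ∀ s ∈ S', Budget' s = B0' s + G' s)
    (hBN' : ∀ w ∉ S', Budget' w = D' (p' w) w + G' w)
    (hL' : ∀ w, L' w = Budget' w -
      ∑ x ∈ univ.filter (fun x => x ∉ S' ∧ p' x = w), D' w x) :
    ∑ w, L' w = ∑ w, L w := by
  have hS'_eq : S' = S.map .inl := by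
    ext x
    simp [hS', eq_comm]
  rw [sum_creditLimit_eq S' p' B0' G' D' Budget' L' hBS' hBN' hL',
    sum_creditLimit_eq S p B0 G D Budget L hBS hBN hL, hS'_eq, sum_map, Fintype.sum_sum_type]
  simp [hB0', hG'l, hG'r]

/-- Sybil splitting: funding a fresh pseudonym by splitting an existing
delegation `D u v = c` into `c₁ + c₂ = c` leaves aggregate credit capacity
unchanged. -/
theorem sybil_split_conserves_capacity
    {U : Type*} [Fintype U] [DecidableEq U]
    (S : Finset U) (p : U → U)
    (B0 G : U → ℝ) (D : U → U → ℝ)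
    (hB0 : ∀ s ∈ S, 0 ≤ B0 s) (hG : ∀ w, 0 ≤ G w)
    (v u : U) (hv : v ∉ S) (hpv : p v = u)
    (c c₁ c₂ : ℝ) (hc : D u v = c) (hc₁ : 0 ≤ c₁) (hc₂ : 0 ≤ c₂)
    (hsplit : c₁ + c₂ = c)
    -- post-split state on `U ⊕ Unit`, where `Sum.inr ()` is the fresh pseudonym
    (S' : Finset (U ⊕ Unit)) (p' : U ⊕ Unit → U ⊕ Unit)
    (B0' G' : U ⊕ Unit → ℝ) (D' : U ⊕ Unit → U ⊕ Unit → ℝ)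
    (hS' : ∀ x, x ∈ S' ↔ ∃ s ∈ S, x = Sum.inl s)
    (hp'l : ∀ w : U, p' (Sum.inl w) = Sum.inl (p w))
    (hp'r : p' (Sum.inr ()) = Sum.inl u)
    (hG'l : ∀ w : U, G' (Sum.inl w) = G w)
    (hG'r : G' (Sum.inr ()) = 0)
    (hB0' : ∀ w : U, B0' (Sum.inl w) = B0 w)
    (hD'v : D' (Sum.inl u) (Sum.inl v) = c₁)
    (hD'new : D' (Sum.inl u) (Sum.inr ()) = c₂)
    (hD'other : ∀ a b : U, ¬(a = u ∧ b = v) →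
      D' (Sum.inl a) (Sum.inl b) = D a b)
    (hD'nonew : ∀ x : U ⊕ Unit, x ≠ Sum.inl u → D' x (Sum.inr ()) = 0)
    (Budget L : U → ℝ) (Budget' L' : U ⊕ Unit → ℝ)
    (hBS : ∀ s ∈ S, Budget s = B0 s + G s)
    (hBN : ∀ w ∉ S, Budget w = D (p w) w + G w)
    (hL : ∀ w, L w = Budget w -
      ∑ x ∈ univ.filter (fun x => x ∉ S ∧ p x = w), D w x)
    (hBS' : ∀ s ∈ S', Budget' s = B0' s + G' s)
    (hBN' : ∀ w ∉ S', Budget' w = D' (p' w) w + G' w)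
    (hL' : ∀ w, L' w = Budget' w -
      ∑ x ∈ univ.filter (fun x => x ∉ S' ∧ p' x = w), D' w x) :
    ∑ w, L' w = ∑ w, L w :=
  sybil_split_conserves_capacity_general S p B0 G D S' p' B0' G' D' hS' hG'l hG'r hB0' Budget L
    Budget' L' hBS hBN hL hBS' hBN' hL'
end
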